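/- Let P : Cᵒᵖ → BoolAlg be a Boolean doctrine over a category C with finite products, and let A = (A_X)_{X ∈ C} and B = (B_X)_{X ∈ C} be families with A_X, B_X ⊆ P(X) for each X ∈ C. Then the following are equivalent: (1) the universal filter for P generated by A intersects the universal ideal for P generated by B in some component; (2) there are Y₁, …, Y_n, Z₁, …, Z_m ∈ C, elements α₁ ∈ A_{Y₁}, …, α_n ∈ A_{Y_n}, β₁ ∈ B_{Z₁}, …, β_m ∈ B_{Z_m}, and morphisms fᵢ : ∏_{j=1}^{m} Zⱼ → Yᵢ (i = 1, …, n) such that, in P(∏_{j=1}^{m} Zⱼ), ⋀_{i=1}^{n} P(fᵢ)(αᵢ) ≤ ⋁_{j=1}^{m} P(prⱼ)(βⱼ). -/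

import Mathlib

open CategoryTheory CategoryTheory.Limits Opposite

universe w v u v₁ u₁ v₂ u₂ v₃ u₃

namespace BooleanDoctrine

/-- Elements of a Boolean algebra in the category `BoolAlg` can be acted on by morphisms. -/
instance (X Y : BoolAlg) : FunLike (X ⟶ Y) X Y :=
  { coe := fun f => f.hom
    coe_injective := by
      intro f g h
      ext x
      exact congrFun h x }

/-- A filter of a Boolean algebra: contains `⊤`, closed under binary meets, upward closed. -/
def IsBAFilter {A : Type*} [BooleanAlgebra A] (F : Set A) : Prop :=
  (⊤ : A) ∈ F ∧ (∀ a b : A, a ∈ F → b ∈ F → a ⊓ b ∈ F) ∧ ∀ a b : A, a ∈ F → a ≤ b → b ∈ F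

/-- The fiber of a Boolean doctrine at an object of the base category. -/
abbrev fiber {C : Type u₁} [Category.{v₁} C] (P : Cᵒᵖ ⥤ BoolAlg.{w}) (X : C) : Type w :=
  P.obj (op X)

/-- A universal filter for a Boolean doctrine `P : Cᵒᵖ ⥤ BoolAlg`. -/
def IsUniversalFilter {C : Type u₁} [Category.{v₁} C] [HasFiniteProducts C]
    (P : Cᵒᵖ ⥤ BoolAlg.{w}) (F : ∀ X : C, Set (P.obj (op X))) : Prop :=
  (∀ (X Y : C) (f : X ⟶ Y) (α : P.obj (op Y)), α ∈ F Y → P.map f.op α ∈ F X) ∧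
    ∀ X : C, IsBAFilter (F X)

/-- A universal ideal for a Boolean doctrine `P : Cᵒᵖ ⥤ BoolAlg`. -/
def IsUniversalIdeal {C : Type u₁} [Category.{v₁} C] [HasFiniteProducts C]
    (P : Cᵒᵖ ⥤ BoolAlg.{w}) (I : ∀ X : C, Set (P.obj (op X))) : Prop :=
  (∀ (X Y : C) (m : ℕ) (f : Fin m → (X ⟶ Y)) (α : P.obj (op Y)),
      (Finset.univ.inf fun j => P.map (f j).op α) ∈ I X → α ∈ I Y) ∧
    (∀ (X : C) (a b : P.obj (op X)), a ≤ b → b ∈ I X → a ∈ I X) ∧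
    (∀ (X₁ X₂ : C) (α₁ : P.obj (op X₁)) (α₂ : P.obj (op X₂)), α₁ ∈ I X₁ → α₂ ∈ I X₂ →
      P.map (prod.fst : X₁ ⨯ X₂ ⟶ X₁).op α₁ ⊔ P.map (prod.snd : X₁ ⨯ X₂ ⟶ X₂).op α₂ ∈
        I (X₁ ⨯ X₂)) ∧
    (⊥ : P.obj (op (⊤_ C))) ∈ I (⊤_ C)

/-- A universal ultrafilter for a Boolean doctrine `P : Cᵒᵖ ⥤ BoolAlg`. -/
def IsUniversalUltrafilter {C : Type u₁} [Category.{v₁} C] [HasFiniteProducts C]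
    (P : Cᵒᵖ ⥤ BoolAlg.{w}) (F : ∀ X : C, Set (P.obj (op X))) : Prop :=
  (∀ (X Y : C) (f : X ⟶ Y) (α : P.obj (op Y)), α ∈ F Y → P.map f.op α ∈ F X) ∧
    (∀ X : C, IsBAFilter (F X)) ∧
    (∀ (X₁ X₂ : C) (α₁ : P.obj (op X₁)) (α₂ : P.obj (op X₂)),
      P.map (prod.fst : X₁ ⨯ X₂ ⟶ X₁).op α₁ ⊔ P.map (prod.snd : X₁ ⨯ X₂ ⟶ X₂).op α₂ ∈
          F (X₁ ⨯ X₂) →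
        α₁ ∈ F X₁ ∨ α₂ ∈ F X₂) ∧
    (⊥ : P.obj (op (⊤_ C))) ∉ F (⊤_ C)

/-- Richness of a Boolean doctrine with respect to a family of subsets of the fibers. -/
def IsRich {C : Type u₁} [Category.{v₁} C] [HasFiniteProducts C]
    (P : Cᵒᵖ ⥤ BoolAlg.{w}) (F : ∀ X : C, Set (P.obj (op X))) : Prop :=
  ∀ (X : C) (α : P.obj (op X)), α ∉ F X → ∃ c : (⊤_ C) ⟶ X, P.map c.op α ∉ F (⊤_ C)

/-- The failure of the "universal closure" of `a` witnessed by a constant `c : ⊤ ⟶ X`. -/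
def IsRichAt {C : Type u₁} [Category.{v₁} C] [HasFiniteProducts C]
    (P : Cᵒᵖ ⥤ BoolAlg.{w}) (F : ∀ X : C, Set (P.obj (op X)))
    (X : C) (a : P.obj (op X)) : Prop :=
  ∃ c : (⊤_ C) ⟶ X, P.map c.op a ∉ F (⊤_ C)

/-- The universal filter generated by a family of subsets of the fibers: the intersection of
all universal filters containing the family componentwise. -/
def genUnivFilter {C : Type u₁} [Category.{v₁} C] [HasFiniteProducts C]
    (P : Cᵒᵖ ⥤ BoolAlg.{w}) (A : ∀ X : C, Set (P.obj (op X))) :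
    ∀ X : C, Set (P.obj (op X)) := fun X =>
  {φ | ∀ G : ∀ X' : C, Set (P.obj (op X')),
    IsUniversalFilter P G → (∀ X', A X' ⊆ G X') → φ ∈ G X}

/-- The universal ideal generated by a family of subsets of the fibers: the intersection of
all universal ideals containing the family componentwise. -/
def genUnivIdeal {C : Type u₁} [Category.{v₁} C] [HasFiniteProducts C]
    (P : Cᵒᵖ ⥤ BoolAlg.{w}) (A : ∀ X : C, Set (P.obj (op X))) :
    ∀ X : C, Set (P.obj (op X)) := fun X =>
  {φ | ∀ J : ∀ X' : C, Set (P.obj (op X')),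
    IsUniversalIdeal P J → (∀ X', A X' ⊆ J X') → φ ∈ J X}

/-- The family of subsets of the fibers placing the element `α i` in the component `Y i`. -/
def familyOfPoints {C : Type u₁} [Category.{v₁} C] (P : Cᵒᵖ ⥤ BoolAlg.{w}) {ι : Type u₃}
    (Y : ι → C) (α : ∀ i, P.obj (op (Y i))) : ∀ X : C, Set (P.obj (op X)) := fun X =>
  {a | ∃ (i : ι) (h : Y i = X), a = P.map (eqToHom h.symm).op (α i)}

/-- The subsets doctrine, sending a set to its powerset Boolean algebra and a function to
its preimage map. -/
def subsetsDoctrine : (Type v)ᵒᵖ ⥤ BoolAlg.{v} where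
  obj X := BoolAlg.of (Set X.unop)
  map f :=
    BoolAlg.ofHom
    { toFun := fun S => f.unop ⁻¹' S
      map_sup' := fun _ _ => rfl
      map_inf' := fun _ _ => rfl
      map_top' := rfl
      map_bot' := rfl }
  map_id _ := rfl
  map_comp _ _ := rfl

/-- A Boolean doctrine morphism: a finite-product-preserving functor together with a
natural transformation. -/
structure DoctrineHom {C : Type u₁} [Category.{v₁} C] {D : Type u₂} [Category.{v₂} D]
    (P : Cᵒᵖ ⥤ BoolAlg.{w}) (R : Dᵒᵖ ⥤ BoolAlg.{w}) where
  functor : C ⥤ D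
  preserves : PreservesFiniteProducts functor
  trans : P ⟶ functor.op ⋙ R

/-- Composition of Boolean doctrine morphisms. -/
def DoctrineHom.comp {C : Type u₁} [Category.{v₁} C] {D : Type u₂} [Category.{v₂} D]
    {E : Type u₃} [Category.{v₃} E]
    {P : Cᵒᵖ ⥤ BoolAlg.{w}} {R : Dᵒᵖ ⥤ BoolAlg.{w}} {S : Eᵒᵖ ⥤ BoolAlg.{w}}
    (Φ : DoctrineHom P R) (Ψ : DoctrineHom R S) : DoctrineHom P S where
  functor := Φ.functor ⋙ Ψ.functor
  preserves := by
    have := Φ.preserves; have := Ψ.preserves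
    infer_instance
  trans := Φ.trans ≫ Functor.whiskerLeft Φ.functor.op Ψ.trans

/-- A first-order structure on a Boolean doctrine: fiberwise right adjoints to reindexing
along first projections, satisfying the Beck–Chevalley condition. -/
structure FOStructure {C : Type u₁} [Category.{v₁} C] [HasFiniteProducts C]
    (P : Cᵒᵖ ⥤ BoolAlg.{w}) where
  fa : ∀ X Y : C, P.obj (op (X ⨯ Y)) → P.obj (op X)
  adj : ∀ (X Y : C) (α : P.obj (op X)) (β : P.obj (op (X ⨯ Y))),
      α ≤ fa X Y β ↔ P.map (prod.fst : X ⨯ Y ⟶ X).op α ≤ β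
  bc : ∀ (X X' Y : C) (f : X' ⟶ X) (β : P.obj (op (X ⨯ Y))),
      P.map f.op (fa X Y β) = fa X' Y (P.map (prod.map f (𝟙 Y)).op β)

/-- The existential quantifier `∃ = ¬∀¬` associated to a first-order structure. -/
noncomputable def FOStructure.ex {C : Type u₁} [Category.{v₁} C] [HasFiniteProducts C]
    {P : Cᵒᵖ ⥤ BoolAlg.{w}} (fo : FOStructure P) (X Y : C)
    (β : P.obj (op (X ⨯ Y))) : P.obj (op X) :=
  (fo.fa X Y βᶜ)ᶜ

/-- The canonical comparison morphism `M X ⨯ M Y ⟶ M (X ⨯ Y)` of a Boolean doctrine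
morphism, inverse to the product comparison morphism. -/
noncomputable def DoctrineHom.prodPair {C : Type u₁} [Category.{v₁} C] [HasFiniteProducts C]
    {D : Type u₂} [Category.{v₂} D] [HasFiniteProducts D]
    {P : Cᵒᵖ ⥤ BoolAlg.{w}} {R : Dᵒᵖ ⥤ BoolAlg.{w}} (Φ : DoctrineHom P R) (X Y : C) :
    (Φ.functor.obj X ⨯ Φ.functor.obj Y) ⟶ Φ.functor.obj (X ⨯ Y) :=
  letI := Φ.preserves
  (PreservesLimitPair.iso Φ.functor X Y).inv

/-- The image of an element of `P (X ⨯ Y)` in `R (M X ⨯ M Y)`, transported along the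
canonical isomorphism `M (X ⨯ Y) ≅ M X ⨯ M Y`. -/
noncomputable def DoctrineHom.transProd {C : Type u₁} [Category.{v₁} C] [HasFiniteProducts C]
    {D : Type u₂} [Category.{v₂} D] [HasFiniteProducts D]
    {P : Cᵒᵖ ⥤ BoolAlg.{w}} {R : Dᵒᵖ ⥤ BoolAlg.{w}} (Φ : DoctrineHom P R) (X Y : C)
    (α : P.obj (op (X ⨯ Y))) : R.obj (op (Φ.functor.obj X ⨯ Φ.functor.obj Y)) :=
  R.map (Φ.prodPair X Y).op (Φ.trans.app (op (X ⨯ Y)) α)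

/-- A Boolean doctrine morphism between first-order Boolean doctrines is first-order when it
commutes with the universal quantifiers. -/
def DoctrineHom.IsFO {C : Type u₁} [Category.{v₁} C] [HasFiniteProducts C]
    {D : Type u₂} [Category.{v₂} D] [HasFiniteProducts D]
    {P : Cᵒᵖ ⥤ BoolAlg.{w}} {R : Dᵒᵖ ⥤ BoolAlg.{w}} (Φ : DoctrineHom P R)
    (foP : FOStructure P) (foR : FOStructure R) : Prop :=
  ∀ (X Y : C) (β : P.obj (op (X ⨯ Y))),
    (Φ.trans.app (op X) (foP.fa X Y β) : R.obj (op (Φ.functor.obj X))) =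
      foR.fa (Φ.functor.obj X) (Φ.functor.obj Y) (Φ.transProd X Y β)

/-- The Boolean doctrine morphism with identity functor part induced by a natural
transformation between two doctrines over the same base. -/
def idDoctrineHom {C : Type u₁} [Category.{v₁} C] {P Q : Cᵒᵖ ⥤ BoolAlg.{w}} (η : P ⟶ Q) :
    DoctrineHom P Q where
  functor := 𝟭 C
  preserves := inferInstance
  trans := η

/-- A quantifier completion of a Boolean doctrine `P`: a first-order Boolean doctrine `Q`
over the same base category together with a Boolean doctrine morphism `(𝟭 C, ι) : P ⟶ Q`
whose functor part is the identity, such that every Boolean doctrine morphism from `P` to a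
first-order Boolean doctrine factors uniquely through it via a first-order Boolean doctrine
morphism. -/
structure QuantifierCompletion.{w', v', u', v₁', u₁'} {C : Type u₁'} [Category.{v₁'} C]
    [HasFiniteProducts C] (P : Cᵒᵖ ⥤ BoolAlg.{w'}) where
  Q : Cᵒᵖ ⥤ BoolAlg.{w'}
  fo : FOStructure Q
  ι : P ⟶ Q
  univ : ∀ {D : Type u'} [Category.{v'} D] [HasFiniteProducts D]
      (R : Dᵒᵖ ⥤ BoolAlg.{w'}) (foR : FOStructure R) (Φ : DoctrineHom P R),
      ∃! Ψ : DoctrineHom Q R, Ψ.IsFO fo foR ∧ Φ = (idDoctrineHom ι).comp Ψ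

/-- A propositional model of a Boolean doctrine: a Boolean doctrine morphism to the
subsets doctrine. -/
abbrev PropModel {C : Type u} [Category.{v} C] (P : Cᵒᵖ ⥤ BoolAlg.{v}) :=
  DoctrineHom P subsetsDoctrine.{v}

/-- The subset of `M X` interpreting an element `α ∈ P X` in a propositional model. -/
def PropModel.interp {C : Type u} [Category.{v} C] {P : Cᵒᵖ ⥤ BoolAlg.{v}}
    (M : PropModel P) {X : C} (α : P.obj (op X)) : Set (M.functor.obj X) :=
  M.trans.app (op X) α



/-- The object map of a Boolean doctrine morphism. -/
abbrev DoctrineHom.onObj {C : Type u₁} [Category.{v₁} C] {D : Type u₂} [Category.{v₂} D]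
    {P : Cᵒᵖ ⥤ BoolAlg.{w}} {R : Dᵒᵖ ⥤ BoolAlg.{w}} (Φ : DoctrineHom P R) (X : C) : D :=
  Φ.functor.obj X

/-- The component at `X` of the natural transformation of a Boolean doctrine morphism,
applied to an element of the fiber. -/
abbrev DoctrineHom.appAt {C : Type u₁} [Category.{v₁} C] {D : Type u₂} [Category.{v₂} D]
    {P : Cᵒᵖ ⥤ BoolAlg.{w}} {R : Dᵒᵖ ⥤ BoolAlg.{w}} (Φ : DoctrineHom P R) (X : C)
    (a : P.obj (op X)) : R.obj (op (Φ.functor.obj X)) :=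
  Φ.trans.app (op X) a

/-!
The generated universal filter and ideal have explicit descriptions: `φ ∈ P(X)` lies in the filter
generated by `A` iff `⋀ᵢ P(fᵢ)(αᵢ) ≤ φ` for finitely many `αᵢ ∈ A` and `fᵢ : X → Yᵢ`, and in the
ideal generated by `B` iff `⋀ₗ P(hₗ)(φ) ≤ ⋁ⱼ P(prⱼ)(βⱼ)` for finitely many `βⱼ ∈ B` and
`hₗ : ∏ⱼ Zⱼ → X`. An element in both therefore yields (2) with the maps `hₗ ≫ fᵢ`. Conversely,
the meet in (2) lies in every universal filter containing `A`, and `⋁ⱼ P(prⱼ)(βⱼ)` lies in every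
universal ideal containing `B` by induction on `m`: its reindexing along the comparison map
`(∏_{j<m} Zⱼ) × Zₘ → ∏ⱼ Zⱼ` is `P(pr₁)(⋁_{j<m} P(prⱼ)(βⱼ)) ∨ P(pr₂)(βₘ)`, which the join axiom
puts in the ideal, and universal ideals reflect membership along a single reindexing.
-/

open Finset

instance (X Y : BoolAlg) : BoundedLatticeHomClass (X ⟶ Y) X Y where
  map_sup f := map_sup f.hom
  map_inf f := map_inf f.hom
  map_top f := map_top f.hom
  map_bot f := map_bot f.hom

lemma IsBAFilter.finset_inf_mem {L ι : Type*} [BooleanAlgebra L] {F : Set L} (hF : IsBAFilter F)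
    (s : Finset ι) {g : ι → L} (hg : ∀ i ∈ s, g i ∈ F) : s.inf g ∈ F := by
  classical
  induction s using Finset.induction with
  | empty => exact hF.1
  | insert i s _ ih =>
    rw [inf_insert]
    exact hF.2.1 _ _ (hg i (mem_insert_self i s)) (ih fun j hj => hg j (mem_insert_of_mem hj))

lemma inf_comp_equiv {L ι κ : Type*} [SemilatticeInf L] [OrderTop L] [Fintype ι] [Fintype κ]
    (e : ι ≃ κ) (g : κ → L) : (univ.inf fun i => g (e i)) = univ.inf g := by
  rw [← map_univ_equiv e, inf_map]
  rfl

lemma sup_comp_equiv {L ι κ : Type*} [SemilatticeSup L] [OrderBot L] [Fintype ι] [Fintype κ]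
    (e : ι ≃ κ) (g : κ → L) : (univ.sup fun i => g (e i)) = univ.sup g := by
  rw [← map_univ_equiv e, sup_map]
  rfl

lemma sup_univ_option {L ι : Type*} [SemilatticeSup L] [OrderBot L] [Fintype ι]
    (g : Option ι → L) : univ.sup g = g none ⊔ univ.sup fun i => g (some i) := by
  rw [univ_option]
  simp [Finset.insertNone, Function.comp_def]

section Reindexing

variable {C : Type*} [Category C] (P : Cᵒᵖ ⥤ BoolAlg.{w})

lemma map_op_comp_apply {X Y W : C} (f : X ⟶ Y) (g : Y ⟶ W) (a : P.obj (op W)) :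
    P.map (f ≫ g).op a = P.map f.op (P.map g.op a) := by
  rw [op_comp, P.map_comp]
  rfl

lemma map_op_finset_inf {X Y : C} (f : X ⟶ Y) {ι : Type*} (s : Finset ι) (g : ι → P.obj (op Y)) :
    P.map f.op (s.inf g) = s.inf fun i => P.map f.op (g i) :=
  map_finset_inf (P.map f.op) s g

lemma map_op_finset_sup {X Y : C} (f : X ⟶ Y) {ι : Type*} (s : Finset ι) (g : ι → P.obj (op Y)) :
    P.map f.op (s.sup g) = s.sup fun i => P.map f.op (g i) :=
  map_finset_sup (P.map f.op) s g

lemma inf_map_op_comp_le {W X : C} {ι σ : Type*} [Fintype ι] [Fintype σ] {Y : ι → C}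
    (h : σ → (W ⟶ X)) (f : ∀ i, X ⟶ Y i) (α : ∀ i, P.obj (op (Y i))) {φ : P.obj (op X)}
    (hφ : (univ.inf fun i => P.map (f i).op (α i)) ≤ φ) :
    (univ.inf fun p : ι × σ => P.map (h p.2 ≫ f p.1).op (α p.1)) ≤
      univ.inf fun l => P.map (h l).op φ := by
  rw [← univ_product_univ, inf_product_right]
  refine inf_mono_fun fun l _ => ?_
  simp only [map_op_comp_apply, ← map_op_finset_inf]
  exact OrderHomClass.mono _ hφ

end Reindexing

section ProjSup

variable {C : Type*} [Category C] [HasFiniteProducts C] (P : Cᵒᵖ ⥤ BoolAlg.{w})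

noncomputable abbrev projSup {κ : Type*} [Fintype κ] (Z : κ → C) (β : ∀ j, P.obj (op (Z j))) :
    P.obj (op (∏ᶜ Z)) :=
  univ.sup fun j => P.map (Pi.π Z j).op (β j)

variable {P}

lemma map_projSup {κ : Type*} [Fintype κ] {W : C} {Z : κ → C} (u : W ⟶ ∏ᶜ Z)
    (β : ∀ j, P.obj (op (Z j))) :
    P.map u.op (projSup P Z β) = univ.sup fun j => P.map (u ≫ Pi.π Z j).op (β j) := by
  simp only [map_op_finset_sup, map_op_comp_apply]

lemma map_reindex_projSup {κ κ' : Type*} [Fintype κ] [Fintype κ'] (e : κ' ≃ κ) (Z : κ → C)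
    (β : ∀ j, P.obj (op (Z j))) :
    P.map (Pi.reindex e Z).hom.op (projSup P Z β) = projSup P (Z ∘ e) fun j => β (e j) := by
  rw [map_projSup, ← sup_comp_equiv e]
  simp only [Pi.reindex_hom_π]

lemma projSup_sum {κ κ' : Type*} [Fintype κ] [Fintype κ'] (Z : κ ⊕ κ' → C)
    (β : ∀ j, P.obj (op (Z j))) :
    projSup P Z β =
      P.map (Pi.lift fun j => Pi.π Z (.inl j)).op
          (projSup P (fun j => Z (.inl j)) fun j => β (.inl j)) ⊔
        P.map (Pi.lift fun j => Pi.π Z (.inr j)).op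
          (projSup P (fun j => Z (.inr j)) fun j => β (.inr j)) := by
  rw [map_projSup, map_projSup, projSup, ← univ_disjSum_univ, sup_disjSum]
  simp only [Pi.lift_π]

variable {J : ∀ X : C, Set (P.obj (op X))}

lemma IsUniversalIdeal.mem_of_map_mem (hJ : IsUniversalIdeal P J) {X Y : C} (f : X ⟶ Y)
    {α : P.obj (op Y)} (h : P.map f.op α ∈ J X) : α ∈ J Y :=
  hJ.1 X Y 1 (fun _ => f) α (by simpa using h)

lemma IsUniversalIdeal.projSup_mem (hJ : IsUniversalIdeal P J) {κ : Type*} [Fintype κ]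
    (Z : κ → C) (β : ∀ j, P.obj (op (Z j))) (hβ : ∀ j, β j ∈ J (Z j)) :
    projSup P Z β ∈ J (∏ᶜ Z) := by
  suffices ∀ (κ : Type _) [Fintype κ] (Z : κ → C) (β : ∀ j, P.obj (op (Z j))),
      (∀ j, β j ∈ J (Z j)) → projSup P Z β ∈ J (∏ᶜ Z) from this κ Z β hβ
  refine Fintype.induction_empty_option (fun κ' κ _ e ih Z β hβ => ?_) (fun Z β hβ => ?_)
    (fun κ _ ih Z β hβ => ?_)
  · let := Fintype.ofEquiv κ e.symm
    refine hJ.mem_of_map_mem (Pi.reindex e Z).hom ?_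
    rw [map_reindex_projSup]
    exact ih _ _ fun j => hβ (e j)
  · refine hJ.mem_of_map_mem (Pi.lift fun j => j.elim : ⊤_ C ⟶ ∏ᶜ Z) ?_
    simpa using hJ.2.2.2
  · let v : (∏ᶜ fun j => Z (some j)) ⨯ Z none ⟶ ∏ᶜ Z :=
      Pi.lift fun o => Option.rec prod.snd (fun j => prod.fst ≫ Pi.π _ j) o
    refine hJ.mem_of_map_mem v ?_
    have hv : P.map v.op (projSup P Z β) =
        P.map prod.fst.op (projSup P (fun j => Z (some j)) fun j => β (some j)) ⊔
          P.map prod.snd.op (β none) := by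
      rw [map_projSup, sup_univ_option, map_projSup, sup_comm]
      simp only [v, Pi.lift_π]
    rw [hv]
    exact hJ.2.2.1 _ _ _ _ (ih _ _ fun j => hβ _) (hβ none)

end ProjSup

section FilterSpan

variable {C : Type*} [Category C] (P : Cᵒᵖ ⥤ BoolAlg.{w}) (A : ∀ X : C, Set (P.obj (op X)))

/- Finite families are indexed by arbitrary finite types rather than `Fin n`, so that concatenating
(`ι ⊕ ι'`) or pairing (`ι × σ`) two families needs no transport along equalities of objects. -/
def univFilterSpan (X : C) : Set (P.obj (op X)) :=
  {φ | ∃ (ι : Type) (_ : Fintype ι) (Y : ι → C) (α : ∀ i, P.obj (op (Y i))) (f : ∀ i, X ⟶ Y i),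
    (∀ i, α i ∈ A (Y i)) ∧ (univ.inf fun i => P.map (f i).op (α i)) ≤ φ}

variable {P A}

lemma subset_univFilterSpan (X : C) : A X ⊆ univFilterSpan P A X := fun φ hφ =>
  ⟨Unit, inferInstance, fun _ => X, fun _ => φ, fun _ => 𝟙 X, fun _ => hφ, by simp⟩

lemma isUniversalFilter_univFilterSpan [HasFiniteProducts C] :
    IsUniversalFilter P (univFilterSpan P A) := by
  refine ⟨?_, fun X => ⟨?_, ?_, ?_⟩⟩
  · rintro X X' g φ ⟨ι, _, Y, α, f, hα, hf⟩
    refine ⟨ι, inferInstance, Y, α, fun i => g ≫ f i, hα, ?_⟩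
    simp only [map_op_comp_apply, ← map_op_finset_inf]
    exact OrderHomClass.mono _ hf
  · exact ⟨PEmpty, inferInstance, PEmpty.elim, fun i => i.elim, fun i => i.elim, fun i => i.elim,
      le_top⟩
  · rintro φ φ' ⟨ι, _, Y, α, f, hα, hf⟩ ⟨ι', _, Y', α', f', hα', hf'⟩
    refine ⟨ι ⊕ ι', inferInstance, Sum.elim Y Y', fun i => Sum.rec α α' i,
      fun i => Sum.rec f f' i, fun i => Sum.rec hα hα' i, ?_⟩
    rw [← univ_disjSum_univ, inf_disjSum]
    exact inf_le_inf hf hf'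
  · rintro φ φ' ⟨ι, _, Y, α, f, hα, hf⟩ hle
    exact ⟨ι, inferInstance, Y, α, f, hα, hf.trans hle⟩

end FilterSpan

section IdealSpan

variable {C : Type*} [Category C] [HasFiniteProducts C] (P : Cᵒᵖ ⥤ BoolAlg.{w})
  (B : ∀ X : C, Set (P.obj (op X)))

def univIdealSpan (X : C) : Set (P.obj (op X)) :=
  {φ | ∃ (κ : Type) (_ : Fintype κ) (Z : κ → C) (β : ∀ j, P.obj (op (Z j)))
    (σ : Type) (_ : Fintype σ) (h : σ → (∏ᶜ Z ⟶ X)),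
    (∀ j, β j ∈ B (Z j)) ∧ (univ.inf fun l => P.map (h l).op φ) ≤ projSup P Z β}

variable {P B}

lemma subset_univIdealSpan (X : C) : B X ⊆ univIdealSpan P B X := fun φ hφ =>
  ⟨Unit, inferInstance, fun _ => X, fun _ => φ, Unit, inferInstance, fun _ => Pi.π _ (),
    fun _ => hφ, by simp [projSup]⟩

lemma univIdealSpan_of_inf_map_mem {X Y : C} {m : ℕ} (f : Fin m → (X ⟶ Y)) {α : P.obj (op Y)}
    (hα : (univ.inf fun j => P.map (f j).op α) ∈ univIdealSpan P B X) :
    α ∈ univIdealSpan P B Y := by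
  obtain ⟨κ, _, Z, β, σ, _, h, hβ, hh⟩ := hα
  exact ⟨κ, inferInstance, Z, β, Fin m × σ, inferInstance, fun p => h p.2 ≫ f p.1, hβ,
    (inf_map_op_comp_le P h f (fun _ => α) le_rfl).trans hh⟩

lemma univIdealSpan_sup_mem {X₁ X₂ : C} {φ₁ : P.obj (op X₁)} {φ₂ : P.obj (op X₂)}
    (hφ₁ : φ₁ ∈ univIdealSpan P B X₁) (hφ₂ : φ₂ ∈ univIdealSpan P B X₂) :
    P.map (prod.fst : X₁ ⨯ X₂ ⟶ X₁).op φ₁ ⊔ P.map (prod.snd : X₁ ⨯ X₂ ⟶ X₂).op φ₂ ∈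
      univIdealSpan P B (X₁ ⨯ X₂) := by
  obtain ⟨κ₁, _, Z₁, β₁, σ₁, _, h₁, hβ₁, hh₁⟩ := hφ₁
  obtain ⟨κ₂, _, Z₂, β₂, σ₂, _, h₂, hβ₂, hh₂⟩ := hφ₂
  let Z := Sum.elim Z₁ Z₂
  let p : ∏ᶜ Z ⟶ ∏ᶜ Z₁ := Pi.lift fun j => Pi.π Z (.inl j)
  let q : ∏ᶜ Z ⟶ ∏ᶜ Z₂ := Pi.lift fun j => Pi.π Z (.inr j)
  refine ⟨κ₁ ⊕ κ₂, inferInstance, Z, fun j => Sum.rec β₁ β₂ j, σ₁ × σ₂, inferInstance,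
    fun l => prod.lift (p ≫ h₁ l.1) (q ≫ h₂ l.2), fun j => Sum.rec hβ₁ hβ₂ j, ?_⟩
  calc (univ.inf fun l : σ₁ × σ₂ => P.map (prod.lift (p ≫ h₁ l.1) (q ≫ h₂ l.2)).op
          (P.map prod.fst.op φ₁ ⊔ P.map prod.snd.op φ₂))
      = P.map p.op (univ.inf fun l => P.map (h₁ l).op φ₁) ⊔
          P.map q.op (univ.inf fun l => P.map (h₂ l).op φ₂) := by
        rw [map_op_finset_inf, map_op_finset_inf, inf_sup_inf, univ_product_univ]
        simp only [map_sup, ← map_op_comp_apply, prod.lift_fst, prod.lift_snd]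
    _ ≤ P.map p.op (projSup P Z₁ β₁) ⊔ P.map q.op (projSup P Z₂ β₂) :=
        sup_le_sup (OrderHomClass.mono _ hh₁) (OrderHomClass.mono _ hh₂)
    _ = _ := by rw [projSup_sum]; rfl

lemma isUniversalIdeal_univIdealSpan : IsUniversalIdeal P (univIdealSpan P B) := by
  refine ⟨fun X Y m f α => univIdealSpan_of_inf_map_mem f, ?_,
    fun X₁ X₂ φ₁ φ₂ => univIdealSpan_sup_mem, ?_⟩
  · rintro X φ φ' hle ⟨κ, _, Z, β, σ, _, h, hβ, hh⟩
    exact ⟨κ, inferInstance, Z, β, σ, inferInstance, h, hβ,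
      (inf_mono_fun fun l _ => OrderHomClass.mono _ hle).trans hh⟩
  · exact ⟨PEmpty, inferInstance, PEmpty.elim, fun j => j.elim, Unit, inferInstance,
      fun _ => terminal.from _, fun j => j.elim, by simp⟩

end IdealSpan

lemma exists_fin_of_fintype {C : Type u₁} [Category.{v₁} C] [HasFiniteProducts C]
    {P : Cᵒᵖ ⥤ BoolAlg.{w}} {A B : ∀ X : C, Set (P.obj (op X))} {ι κ : Type*} [Fintype ι]
    [Fintype κ] {Y : ι → C} {Z : κ → C} {α : ∀ i, P.obj (op (Y i))} {β : ∀ j, P.obj (op (Z j))}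
    (f : ∀ i, ∏ᶜ Z ⟶ Y i) (hα : ∀ i, α i ∈ A (Y i)) (hβ : ∀ j, β j ∈ B (Z j))
    (hle : (univ.inf fun i => P.map (f i).op (α i)) ≤ projSup P Z β) :
    ∃ (n m : ℕ) (Y : Fin n → C) (Z : Fin m → C) (α : ∀ i, P.obj (op (Y i)))
      (β : ∀ j, P.obj (op (Z j))) (f : ∀ i, (∏ᶜ Z) ⟶ Y i),
      (∀ i, α i ∈ A (Y i)) ∧ (∀ j, β j ∈ B (Z j)) ∧
        (univ.inf fun i => P.map (f i).op (α i)) ≤ univ.sup fun j => P.map (Pi.π Z j).op (β j) := by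
  let e := (Fintype.equivFin ι).symm
  let e' := (Fintype.equivFin κ).symm
  refine ⟨_, _, Y ∘ e, Z ∘ e', fun i => α (e i), fun j => β (e' j),
    fun i => (Pi.reindex e' Z).hom ≫ f (e i), fun i => hα (e i), fun j => hβ (e' j), ?_⟩
  calc (univ.inf fun i => P.map ((Pi.reindex e' Z).hom ≫ f (e i)).op (α (e i)))
      = P.map (Pi.reindex e' Z).hom.op (univ.inf fun i => P.map (f i).op (α i)) := by
        rw [map_op_finset_inf, ← inf_comp_equiv e]
        simp only [map_op_comp_apply]
    _ ≤ P.map (Pi.reindex e' Z).hom.op (projSup P Z β) := OrderHomClass.mono _ hle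
    _ = _ := map_reindex_projSup e' Z β

theorem stmt12 {C : Type u₁} [Category.{v₁} C] [HasFiniteProducts C]
    (P : Cᵒᵖ ⥤ BoolAlg.{w}) (A B : ∀ X : C, Set (P.obj (op X))) :
    (∃ X : C, (genUnivFilter P A X ∩ genUnivIdeal P B X).Nonempty) ↔
      ∃ (n m : ℕ) (Y : Fin n → C) (Z : Fin m → C) (α : ∀ i, P.obj (op (Y i)))
        (β : ∀ j, P.obj (op (Z j))) (f : ∀ i, (∏ᶜ Z) ⟶ Y i),
        (∀ i, α i ∈ A (Y i)) ∧ (∀ j, β j ∈ B (Z j)) ∧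
          (Finset.univ.inf fun i => P.map (f i).op (α i)) ≤
            Finset.univ.sup fun j => P.map (Pi.π Z j).op (β j) := by
  constructor
  · rintro ⟨X, φ, hφA, hφB⟩
    obtain ⟨ι, _, Y, α, f, hα, hf⟩ :=
      hφA _ isUniversalFilter_univFilterSpan subset_univFilterSpan
    obtain ⟨κ, _, Z, β, σ, _, h, hβ, hh⟩ :=
      hφB _ isUniversalIdeal_univIdealSpan subset_univIdealSpan
    exact exists_fin_of_fintype (fun p : ι × σ => h p.2 ≫ f p.1) (fun p => hα p.1) hβ
      ((inf_map_op_comp_le P h f α hf).trans hh)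
  · rintro ⟨n, m, Y, Z, α, β, f, hα, hβ, hle⟩
    refine ⟨∏ᶜ Z, univ.inf fun i => P.map (f i).op (α i), fun G hG hAG => ?_, fun J hJ hBJ => ?_⟩
    · exact (hG.2 _).finset_inf_mem _ fun i _ => hG.1 _ _ (f i) _ (hAG _ (hα i))
    · exact hJ.2.1 _ _ _ hle (hJ.projSup_mem Z β fun j => hBJ _ (hβ j))

end BooleanDoctrine
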